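/- arXiv:2206.09947 — 3 statements merged into one kernel-verified Lean document; each statement's English description precedes it below -/
import Mathlib

section
/- The operator norm of the Volterra operator V on L²[0,1] equals 2/π. -/
open MeasureTheory Real

noncomputable def m : Measure ℝ := volume.restrict (Set.Icc 0 1)

/-!
Upper bound: Schur's test with the kernel `1_{0 < t ≤ x}` and the test functions
`p t = cos (π t / 2)`, `q x = sin (π x / 2)`, which satisfy `∫₀ˣ p = (2/π) q x` and
`∫ₜ¹ q = (2/π) p t`; weighted Cauchy–Schwarz then gives `‖V f‖² ≤ (2/π)² ‖f‖²`.
Lower bound: `p` is an eigenvector of `V* V` for the eigenvalue `(2/π)²`; concretely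
`V p = (2/π) q` and `‖q‖ = ‖p‖`.
-/

open scoped ENNReal

theorem ENNReal.sq_lintegral_mul_le {α : Type*} [MeasurableSpace α] {μ : Measure α}
    {w p g : α → ℝ≥0∞} (hw : AEMeasurable w μ) (hp : AEMeasurable p μ) (hg : AEMeasurable g μ)
    (hp₀ : ∀ᵐ a ∂μ, p a ≠ 0) (hp_top : ∀ᵐ a ∂μ, p a ≠ ∞) :
    (∫⁻ a, w a * g a ∂μ) ^ 2 ≤ (∫⁻ a, w a * p a ∂μ) * ∫⁻ a, w a * (g a ^ 2 / p a) ∂μ := by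
  have h_split : ∀ᵐ a ∂μ, w a * g a =
      (w a * p a) ^ (2⁻¹ : ℝ) * (w a * (g a ^ 2 / p a)) ^ (2⁻¹ : ℝ) := by
    filter_upwards [hp₀, hp_top] with a ha₀ ha_top
    rw [← ENNReal.mul_rpow_of_nonneg _ _ (by norm_num), mul_mul_mul_comm,
      ENNReal.mul_div_cancel ha₀ ha_top, ← sq, ← mul_pow, ← ENNReal.rpow_natCast,
      ← ENNReal.rpow_mul]
    norm_num
  have h_holder := ENNReal.lintegral_mul_norm_pow_le (hw.mul hp)
    (hw.mul ((hg.pow_const 2).div hp)) (p := 2⁻¹) (q := 2⁻¹) (by norm_num) (by norm_num)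
    (by norm_num)
  calc (∫⁻ a, w a * g a ∂μ) ^ 2
      ≤ ((∫⁻ a, w a * p a ∂μ) ^ (2⁻¹ : ℝ) * (∫⁻ a, w a * (g a ^ 2 / p a) ∂μ) ^ (2⁻¹ : ℝ)) ^ 2 := by
        rw [lintegral_congr_ae h_split]
        gcongr
        exact h_holder
    _ = (∫⁻ a, w a * p a ∂μ) * ∫⁻ a, w a * (g a ^ 2 / p a) ∂μ := by
        rw [mul_pow, ← ENNReal.rpow_natCast, ← ENNReal.rpow_natCast, ← ENNReal.rpow_mul,
          ← ENNReal.rpow_mul]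
        norm_num

-- Schur's test.
theorem lintegral_sq_lintegral_kernel_le {X Y : Type*} [MeasurableSpace X] [MeasurableSpace Y]
    {μ : Measure X} {ν : Measure Y} [SFinite μ] [SFinite ν] {K : X → Y → ℝ≥0∞}
    (hK : Measurable (Function.uncurry K)) {p : Y → ℝ≥0∞} {q : X → ℝ≥0∞}
    (hp : Measurable p) (hq : Measurable q) (hp₀ : ∀ᵐ t ∂ν, p t ≠ 0) (hp_top : ∀ᵐ t ∂ν, p t ≠ ∞)
    {α β : ℝ≥0∞} (hKp : ∀ᵐ x ∂μ, ∫⁻ t, K x t * p t ∂ν ≤ α * q x)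
    (hKq : ∀ᵐ t ∂ν, ∫⁻ x, K x t * q x ∂μ ≤ β * p t) {g : Y → ℝ≥0∞} (hg : AEMeasurable g ν) :
    ∫⁻ x, (∫⁻ t, K x t * g t ∂ν) ^ 2 ∂μ ≤ α * β * ∫⁻ t, g t ^ 2 ∂ν := by
  set h : Y → ℝ≥0∞ := fun t => g t ^ 2 / p t
  have hK_left (x : X) : Measurable (K x) := hK.comp measurable_prodMk_left
  have hK_right (t : Y) : Measurable (K · t) := hK.comp measurable_prodMk_right
  have hh : AEMeasurable h ν := (hg.pow_const 2).div hp.aemeasurable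
  have hKh : AEMeasurable (fun z : X × Y => K z.1 z.2 * h z.2) (μ.prod ν) :=
    hK.aemeasurable.mul hh.comp_snd
  calc ∫⁻ x, (∫⁻ t, K x t * g t ∂ν) ^ 2 ∂μ
      ≤ ∫⁻ x, (∫⁻ t, K x t * p t ∂ν) * ∫⁻ t, K x t * h t ∂ν ∂μ :=
        lintegral_mono fun x => ENNReal.sq_lintegral_mul_le (hK_left x).aemeasurable
          hp.aemeasurable hg hp₀ hp_top
    _ ≤ ∫⁻ x, α * (q x * ∫⁻ t, K x t * h t ∂ν) ∂μ := by
        refine lintegral_mono_ae ?_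
        filter_upwards [hKp] with x hx
        rw [← mul_assoc]
        gcongr
    _ = α * ∫⁻ x, ∫⁻ t, q x * (K x t * h t) ∂ν ∂μ := by
        have hqKh : AEMeasurable (fun x => q x * ∫⁻ t, K x t * h t ∂ν) μ :=
          hq.aemeasurable.mul hKh.lintegral_prod_right'
        rw [lintegral_const_mul'' _ hqKh]
        refine congrArg _ (lintegral_congr fun x => ?_)
        exact (lintegral_const_mul'' _ ((hK_left x).aemeasurable.mul hh)).symm
    _ = α * ∫⁻ t, ∫⁻ x, q x * (K x t * h t) ∂μ ∂ν := by
        rw [lintegral_lintegral_swap (hq.aemeasurable.comp_fst.mul hKh)]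
    _ = α * ∫⁻ t, (∫⁻ x, K x t * q x ∂μ) * h t ∂ν := by
        refine congrArg _ (lintegral_congr fun t => ?_)
        rw [← lintegral_mul_const (f := fun x => K x t * q x) _ ((hK_right t).mul hq)]
        refine lintegral_congr fun x => ?_
        ring
    _ ≤ α * ∫⁻ t, β * g t ^ 2 ∂ν := by
        gcongr α * ?_
        refine lintegral_mono_ae ?_
        filter_upwards [hKq, hp₀, hp_top] with t ht ht₀ ht_top
        calc (∫⁻ x, K x t * q x ∂μ) * h t ≤ β * p t * h t := by gcongr
          _ = β * g t ^ 2 := by rw [mul_assoc, ENNReal.mul_div_cancel ht₀ ht_top]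
    _ = α * β * ∫⁻ t, g t ^ 2 ∂ν := by
        rw [lintegral_const_mul'' _ (hg.pow_const 2), mul_assoc]

theorem eLpNorm_two_sq {α ε : Type*} [MeasurableSpace α] [ENorm ε] {μ : Measure α} (f : α → ε) :
    eLpNorm f 2 μ ^ 2 = ∫⁻ a, ‖f a‖ₑ ^ 2 ∂μ := by
  simpa using eLpNorm_nnreal_pow_eq_lintegral (f := f) (μ := μ) (p := 2) two_ne_zero

theorem lintegral_Ioc_ofReal_eq_ofReal_integral {f : ℝ → ℝ} {a b : ℝ} (hab : a ≤ b)
    (hf : IntegrableOn f (Set.Ioc a b)) (hf₀ : ∀ t ∈ Set.Ioc a b, 0 ≤ f t) :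
    ∫⁻ t in Set.Ioc a b, ENNReal.ofReal (f t) = ENNReal.ofReal (∫ t in a..b, f t) := by
  rw [intervalIntegral.integral_of_le hab, ofReal_integral_eq_lintegral_ofReal hf
    ((ae_restrict_iff' measurableSet_Ioc).mpr (ae_of_all _ hf₀))]

theorem integral_cos_pi_div_two_mul (x : ℝ) :
    ∫ t in 0..x, cos (π / 2 * t) = 2 / π * sin (π / 2 * x) := by
  rw [intervalIntegral.integral_comp_mul_left cos (by positivity), integral_cos]
  simp [field]

theorem integral_sin_pi_div_two_mul (t : ℝ) :
    ∫ x in t..1, sin (π / 2 * x) = 2 / π * cos (π / 2 * t) := by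
  rw [intervalIntegral.integral_comp_mul_left sin (by positivity), integral_sin]
  simp [field]

theorem integral_cos_pi_div_two_mul_sq : ∫ t in 0..1, cos (π / 2 * t) ^ 2 = 1 / 2 := by
  rw [intervalIntegral.integral_comp_mul_left (cos · ^ 2) (by positivity), integral_cos_sq]
  simp [field]

theorem integral_sin_pi_div_two_mul_sq : ∫ t in 0..1, sin (π / 2 * t) ^ 2 = 1 / 2 := by
  rw [intervalIntegral.integral_comp_mul_left (sin · ^ 2) (by positivity), integral_sin_sq]
  simp [field]

instance : IsFiniteMeasure m := by unfold m; infer_instance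

theorem m_restrict_of_subset {s : Set ℝ} (hs : s ⊆ Set.Icc 0 1) :
    m.restrict s = volume.restrict s :=
  Measure.restrict_restrict_of_subset hs

theorem ae_m_mem_Ioo : ∀ᵐ x ∂m, x ∈ Set.Ioo (0 : ℝ) 1 := by
  rw [m, ← Measure.restrict_congr_set Ioo_ae_eq_Icc]
  exact ae_restrict_mem measurableSet_Ioo

noncomputable def volterraKernel (x t : ℝ) : ℝ≥0∞ := (Set.Ioc 0 x).indicator 1 t

theorem measurable_volterraKernel : Measurable (Function.uncurry volterraKernel) :=
  measurable_const.indicator <| (measurableSet_lt measurable_const measurable_snd).inter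
    (measurableSet_le measurable_snd measurable_fst)

theorem lintegral_volterraKernel_mul (x : ℝ) (g : ℝ → ℝ≥0∞) :
    ∫⁻ t, volterraKernel x t * g t ∂m = ∫⁻ t in Set.Ioc 0 x, g t ∂m := by
  rw [← lintegral_indicator measurableSet_Ioc]
  refine lintegral_congr fun t => ?_
  simp only [volterraKernel, Set.indicator_apply, Pi.one_apply]
  split_ifs <;> simp

theorem lintegral_volterraKernel_mul_cos {x : ℝ} (hx : x ∈ Set.Icc (0 : ℝ) 1) :
    ∫⁻ t, volterraKernel x t * ENNReal.ofReal (cos (π / 2 * t)) ∂m =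
      ENNReal.ofReal (2 / π) * ENNReal.ofReal (sin (π / 2 * x)) := by
  have hsub : Set.Ioc 0 x ⊆ Set.Icc 0 1 :=
    Set.Ioc_subset_Icc_self.trans (Set.Icc_subset_Icc_right hx.2)
  rw [lintegral_volterraKernel_mul, m_restrict_of_subset hsub,
    lintegral_Ioc_ofReal_eq_ofReal_integral hx.1 (by fun_prop : Continuous _).integrableOn_Ioc,
    integral_cos_pi_div_two_mul, ENNReal.ofReal_mul (by positivity)]
  intro t ht
  exact cos_nonneg_of_mem_Icc ⟨by nlinarith [pi_pos, ht.1], by nlinarith [pi_pos, ht.2, hx.2]⟩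

theorem lintegral_volterraKernel_mul_sin_le {t : ℝ} (ht : t ∈ Set.Icc (0 : ℝ) 1) :
    ∫⁻ x, volterraKernel x t * ENNReal.ofReal (sin (π / 2 * x)) ∂m ≤
      ENNReal.ofReal (2 / π) * ENNReal.ofReal (cos (π / 2 * t)) := by
  calc ∫⁻ x, volterraKernel x t * ENNReal.ofReal (sin (π / 2 * x)) ∂m
      ≤ ∫⁻ x in Set.Icc t 1, ENNReal.ofReal (sin (π / 2 * x)) ∂m := by
        rw [← lintegral_indicator measurableSet_Icc]
        refine lintegral_mono_ae ?_
        filter_upwards [ae_m_mem_Ioo] with x hx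
        by_cases htx : t ≤ x
        · rw [Set.indicator_of_mem (Set.mem_Icc.mpr ⟨htx, hx.2.le⟩)]
          exact mul_le_of_le_one_left' (Set.indicator_le_self' (fun _ _ => zero_le_one) t)
        · simp [volterraKernel, htx]
    _ = _ := by
        rw [m_restrict_of_subset (Set.Icc_subset_Icc_left ht.1),
          Measure.restrict_congr_set Ioc_ae_eq_Icc.symm,
          lintegral_Ioc_ofReal_eq_ofReal_integral ht.2
            (by fun_prop : Continuous _).integrableOn_Ioc,
          integral_sin_pi_div_two_mul, ENNReal.ofReal_mul (by positivity)]
        intro x hx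
        exact sin_nonneg_of_nonneg_of_le_pi (by nlinarith [pi_pos, ht.1, hx.1])
          (by nlinarith [pi_pos, hx.2])

theorem lintegral_sq_lintegral_volterraKernel_le {g : ℝ → ℝ≥0∞} (hg : AEMeasurable g m) :
    ∫⁻ x, (∫⁻ t, volterraKernel x t * g t ∂m) ^ 2 ∂m ≤
      ENNReal.ofReal (2 / π) ^ 2 * ∫⁻ t, g t ^ 2 ∂m := by
  rw [sq (ENNReal.ofReal _)]
  refine lintegral_sq_lintegral_kernel_le measurable_volterraKernel
    (p := fun t => ENNReal.ofReal (cos (π / 2 * t)))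
    (q := fun x => ENNReal.ofReal (sin (π / 2 * x)))
    (Measurable.ennreal_ofReal (by fun_prop)) (Measurable.ennreal_ofReal (by fun_prop))
    ?_ (ae_of_all _ fun _ => ENNReal.ofReal_ne_top) ?_ ?_ hg
  · filter_upwards [ae_m_mem_Ioo] with t ht
    exact (ENNReal.ofReal_pos.mpr (cos_pos_of_mem_Ioo
      ⟨by nlinarith [pi_pos, ht.1], by nlinarith [pi_pos, ht.2]⟩)).ne'
  · filter_upwards [ae_m_mem_Ioo] with x hx
    exact (lintegral_volterraKernel_mul_cos (Set.Ioo_subset_Icc_self hx)).le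
  · filter_upwards [ae_m_mem_Ioo] with t ht
    exact lintegral_volterraKernel_mul_sin_le (Set.Ioo_subset_Icc_self ht)

theorem eLpNorm_volterra_le {f : ℝ → ℂ} (hf : AEStronglyMeasurable f m) :
    eLpNorm (fun x => ∫ t in Set.Ioc 0 x, f t ∂m) 2 m ≤ ENNReal.ofReal (2 / π) * eLpNorm f 2 m := by
  rw [← ENNReal.pow_le_pow_left_iff two_ne_zero, mul_pow, eLpNorm_two_sq, eLpNorm_two_sq]
  calc ∫⁻ x, ‖∫ t in Set.Ioc 0 x, f t ∂m‖ₑ ^ 2 ∂m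
      ≤ ∫⁻ x, (∫⁻ t, volterraKernel x t * ‖f t‖ₑ ∂m) ^ 2 ∂m := by
        gcongr with x
        rw [lintegral_volterraKernel_mul]
        exact enorm_integral_le_lintegral_enorm _
    _ ≤ _ := lintegral_sq_lintegral_volterraKernel_le hf.enorm

theorem Lp.norm_eq_sqrt_integral_sq {F : Lp ℂ 2 m} {g : ℝ → ℝ} (hg : Continuous g)
    (hF : F =ᵐ[m] fun t => (g t : ℂ)) : ‖F‖ = √(∫ t in 0..1, g t ^ 2) := by
  have h_sq : eLpNorm F 2 m ^ 2 = ENNReal.ofReal (∫ t in 0..1, g t ^ 2) := by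
    have h_enorm (t : ℝ) : ‖(g t : ℂ)‖ₑ ^ 2 = ENNReal.ofReal (g t ^ 2) := by
      rw [← ofReal_norm, Complex.norm_real, Real.norm_eq_abs,
        ← ENNReal.ofReal_pow (abs_nonneg _), sq_abs]
    rw [eLpNorm_congr_ae hF, eLpNorm_two_sq, m, Measure.restrict_congr_set Ioc_ae_eq_Icc.symm]
    simp_rw [h_enorm]
    exact lintegral_Ioc_ofReal_eq_ofReal_integral zero_le_one (hg.pow 2).integrableOn_Ioc
      fun t _ => sq_nonneg _
  rw [Lp.norm_def, ← Real.sqrt_sq ENNReal.toReal_nonneg, ← ENNReal.toReal_pow, h_sq,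
    ENNReal.toReal_ofReal (intervalIntegral.integral_nonneg zero_le_one fun t _ => sq_nonneg _)]

theorem setIntegral_Ioc_cos_pi_div_two_mul {x : ℝ} (hx : x ∈ Set.Icc (0 : ℝ) 1) :
    ∫ t in Set.Ioc 0 x, ((cos (π / 2 * t) : ℝ) : ℂ) ∂m = ((2 / π * sin (π / 2 * x) : ℝ) : ℂ) := by
  rw [m_restrict_of_subset (Set.Ioc_subset_Icc_self.trans (Set.Icc_subset_Icc_right hx.2)),
    integral_complex_ofReal, ← intervalIntegral.integral_of_le hx.1, integral_cos_pi_div_two_mul]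

theorem volterra_norm (V : Lp ℂ 2 m →L[ℂ] Lp ℂ 2 m)
    (hV : ∀ f : Lp ℂ 2 m, V f =ᵐ[m] fun x => ∫ t in Set.Ioc 0 x, f t ∂m) :
    ‖V‖ = 2 / π := by
  have h2π : 0 < 2 / π := by positivity
  refine le_antisymm (V.opNorm_le_bound h2π.le fun f => ?_) ?_
  · rw [Lp.norm_def, Lp.norm_def, eLpNorm_congr_ae (hV f), ← ENNReal.toReal_ofReal h2π.le,
      ← ENNReal.toReal_mul]
    exact ENNReal.toReal_mono (ENNReal.mul_ne_top ENNReal.ofReal_ne_top (Lp.eLpNorm_ne_top f))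
      (eLpNorm_volterra_le (Lp.aestronglyMeasurable f))
  · have hcos : MemLp (fun t => ((cos (π / 2 * t) : ℝ) : ℂ)) 2 m :=
      MemLp.of_bound (by fun_prop) 1 (ae_of_all _ fun t => by
        rw [Complex.norm_real, Real.norm_eq_abs]; exact abs_cos_le_one _)
    set F := hcos.toLp _
    have hVF : V F =ᵐ[m] fun x => ((2 / π * sin (π / 2 * x) : ℝ) : ℂ) := by
      filter_upwards [hV F, ae_m_mem_Ioo] with x hVx hx
      rw [hVx, ← setIntegral_Ioc_cos_pi_div_two_mul (Set.Ioo_subset_Icc_self hx)]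
      exact integral_congr_ae (ae_restrict_of_ae hcos.coeFn_toLp)
    have hF : ‖F‖ = √(1 / 2) := by
      rw [Lp.norm_eq_sqrt_integral_sq (by fun_prop) hcos.coeFn_toLp, integral_cos_pi_div_two_mul_sq]
    have hVF_norm : ‖V F‖ = 2 / π * √(1 / 2) := by
      rw [Lp.norm_eq_sqrt_integral_sq (by fun_prop) hVF]
      simp_rw [mul_pow]
      rw [intervalIntegral.integral_const_mul, integral_sin_pi_div_two_mul_sq,
        Real.sqrt_mul (sq_nonneg _), Real.sqrt_sq h2π.le]
    have h := V.le_opNorm F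
    rw [hF, hVF_norm] at h
    exact le_of_mul_le_mul_right h (by positivity)
end

section
/- For every complex number ν ≠ 0, the operator norm of I + νV is strictly greater than 1, where V is the Volterra operator on L²[0,1]. -/
open MeasureTheory

/-!
Test `I + νV` against the unit vectors `e_c(x) = exp (i c x)`, `c = ±2π`. Since `e_c(1) = 1`,
`V e_c = (e_c - 1) / (i c)` and the mean of `e_{-c}` vanishes, so `⟪e_c, V e_c⟫ = 1 / (i c)` and
`⟪e_c, (I + νV) e_c⟫ = 1 ± w` with `w = ν / (2π i) ≠ 0`. By the parallelogram law
`|1 + w|² + |1 - w|² = 2 + 2|w|² > 2`, so one of these numerical-range values exceeds `1`.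
-/

open Complex ComplexConjugate Set
open scoped Real

theorem one_lt_norm_add_or_one_lt_norm_sub {E : Type*} [NormedAddCommGroup E]
    [InnerProductSpace ℝ E] {x y : E} (hx : ‖x‖ = 1) (hy : y ≠ 0) :
    1 < ‖x + y‖ ∨ 1 < ‖x - y‖ := by
  by_contra! h
  have hpar := parallelogram_law_with_norm ℝ x y
  have hy' := norm_pos_iff.2 hy
  nlinarith [norm_nonneg (x + y), norm_nonneg (x - y)]

theorem norm_inner_apply_le_opNorm {𝕜 E : Type*} [RCLike 𝕜] [NormedAddCommGroup E]
    [InnerProductSpace 𝕜 E] (A : E →L[𝕜] E) {x : E} (hx : ‖x‖ = 1) :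
    ‖inner 𝕜 x (A x)‖ ≤ ‖A‖ :=
  (norm_inner_le_norm _ _).trans (by simpa [hx] using A.le_opNorm x)

instance : IsProbabilityMeasure m := ⟨by simp [m]⟩

theorem setIntegral_Ioc_m {E : Type*} [NormedAddCommGroup E] [NormedSpace ℝ E] (f : ℝ → E)
    {x : ℝ} (hx : x ∈ Icc (0 : ℝ) 1) : ∫ t in Ioc 0 x, f t ∂m = ∫ t in 0..x, f t := by
  rw [m, Measure.restrict_restrict measurableSet_Ioc,
    inter_eq_left.2 (Ioc_subset_Icc_self.trans (Icc_subset_Icc_right hx.2)),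
    intervalIntegral.integral_of_le hx.1]

theorem integral_m {E : Type*} [NormedAddCommGroup E] [NormedSpace ℝ E] (f : ℝ → E) :
    ∫ t, f t ∂m = ∫ t in 0..1, f t := by
  rw [m, intervalIntegral.integral_of_le zero_le_one, integral_Icc_eq_integral_Ioc]

noncomputable def expMulI (c : ℝ) (x : ℝ) : ℂ := exp (c * x * I)

theorem norm_expMulI (c x : ℝ) : ‖expMulI c x‖ = 1 := by
  simpa [expMulI] using norm_exp_ofReal_mul_I (c * x)

theorem conj_expMulI (c x : ℝ) : conj (expMulI c x) = expMulI (-c) x := by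
  simp only [expMulI, ← exp_conj]
  simp [conj_ofReal]

theorem expMulI_mul_expMulI_neg (c x : ℝ) : expMulI c x * expMulI (-c) x = 1 := by
  simp [expMulI, ← exp_add]

theorem integral_expMulI {c : ℝ} (hc : c ≠ 0) (x : ℝ) :
    ∫ t in 0..x, expMulI c t = (expMulI c x - 1) / (c * I) := by
  have := integral_exp_mul_complex (a := 0) (b := x) (c := c * I) (by simp [hc])
  simp only [expMulI, mul_right_comm _ _ I, mul_comm _ (I : ℂ)] at this ⊢
  simpa using this

theorem memLp_expMulI (c : ℝ) : MemLp (expMulI c) 2 m :=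
  MemLp.of_bound (by unfold expMulI; fun_prop) 1 (by simp [norm_expMulI])

noncomputable def expLp (c : ℝ) : Lp ℂ 2 m := (memLp_expMulI c).toLp

theorem coeFn_expLp (c : ℝ) : expLp c =ᵐ[m] expMulI c := (memLp_expMulI c).coeFn_toLp

theorem norm_expLp (c : ℝ) : ‖expLp c‖ = 1 := by
  rw [expLp, Lp.norm_toLp, eLpNorm_congr_norm_ae (g := fun _ ↦ (1 : ℂ))
    (.of_forall fun x ↦ by simp [norm_expMulI])]
  simp [eLpNorm_const']

theorem integral_expMulI_eq_zero {c : ℝ} (hc : c ≠ 0) (hce : exp (c * I) = 1) :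
    ∫ x, expMulI c x ∂m = 0 := by
  rw [integral_m, integral_expMulI hc]
  simp [expMulI, hce]

theorem ae_mem_Icc_m : ∀ᵐ x ∂m, x ∈ Icc (0 : ℝ) 1 := ae_restrict_mem measurableSet_Icc

section Volterra

variable (V : Lp ℂ 2 m →L[ℂ] Lp ℂ 2 m)

theorem volterra_expLp_ae (hV : ∀ f : Lp ℂ 2 m, V f =ᵐ[m] fun x => ∫ t in Ioc 0 x, f t ∂m)
    {c : ℝ} (hc : c ≠ 0) :
    V (expLp c) =ᵐ[m] fun x ↦ (expMulI c x - 1) / (c * I) := by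
  filter_upwards [hV (expLp c), ae_mem_Icc_m] with x hVx hx
  rw [hVx, ← integral_expMulI hc, ← setIntegral_Ioc_m _ hx]
  exact integral_congr_ae (ae_restrict_of_ae (coeFn_expLp c))

theorem inner_expLp_volterra
    (hV : ∀ f : Lp ℂ 2 m, V f =ᵐ[m] fun x => ∫ t in Ioc 0 x, f t ∂m)
    {c : ℝ} (hc : c ≠ 0) (hce : exp (c * I) = 1) :
    inner ℂ (expLp c) (V (expLp c)) = 1 / (c * I) := by
  rw [L2.inner_def]
  calc ∫ x, inner ℂ (expLp c x) (V (expLp c) x) ∂m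
      = ∫ x, (1 - expMulI (-c) x) / (c * I) ∂m := by
        refine integral_congr_ae ?_
        filter_upwards [coeFn_expLp c, volterra_expLp_ae V hV hc] with x hx hVx
        rw [hx, hVx, RCLike.inner_apply, conj_expMulI, div_mul_eq_mul_div, sub_mul,
          expMulI_mul_expMulI_neg, one_mul]
    _ = 1 / (c * I) := by
        rw [integral_div,
          integral_sub (integrable_const 1) ((memLp_expMulI _).integrable one_le_two),
          integral_expMulI_eq_zero (neg_ne_zero.2 hc)
            (by simpa [exp_neg] using congrArg (·⁻¹) hce)]
        simp

theorem norm_one_add_div_le_norm_one_add_smul_volterra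
    (hV : ∀ f : Lp ℂ 2 m, V f =ᵐ[m] fun x => ∫ t in Ioc 0 x, f t ∂m)
    (ν : ℂ) {c : ℝ} (hc : c ≠ 0) (hce : exp (c * I) = 1) :
    ‖1 + ν / (c * I)‖ ≤ ‖(1 : Lp ℂ 2 m →L[ℂ] Lp ℂ 2 m) + ν • V‖ := by
  set A := (1 : Lp ℂ 2 m →L[ℂ] Lp ℂ 2 m) + ν • V
  have hinner : inner ℂ (expLp c) (A (expLp c)) = 1 + ν / (c * I) := by
    simp [A, inner_add_right, inner_smul_right, norm_expLp,
      inner_expLp_volterra V hV hc hce, div_eq_mul_one_div ν]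
  simpa [hinner] using norm_inner_apply_le_opNorm A (norm_expLp c)

end Volterra

theorem norm_one_add_smul_volterra_gt_one (V : Lp ℂ 2 m →L[ℂ] Lp ℂ 2 m)
    (hV : ∀ f : Lp ℂ 2 m, V f =ᵐ[m] fun x => ∫ t in Set.Ioc 0 x, f t ∂m) :
    ∀ ν : ℂ, ν ≠ 0 → 1 < ‖(1 : Lp ℂ 2 m →L[ℂ] Lp ℂ 2 m) + ν • V‖ := by
  intro ν hν
  have hw : ν / ((2 * π : ℝ) * I) ≠ 0 := div_ne_zero hν (by simp [Real.pi_ne_zero])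
  rcases one_lt_norm_add_or_one_lt_norm_sub norm_one hw with h | h
  · refine h.trans_le (norm_one_add_div_le_norm_one_add_smul_volterra V hV ν
      (by positivity) ?_)
    simp
  · refine h.trans_le ?_
    simpa [div_neg, ← sub_eq_add_neg] using norm_one_add_div_le_norm_one_add_smul_volterra V hV ν
      (c := -(2 * π)) (by simp [Real.pi_ne_zero]) (by simp [exp_neg])
end

section
/- Suppose ξ, η are real numbers satisfying ξ ≤ 0, 4η²/π² − 2η + ξ² ≤ 0, and (4ξ/π² − 1)η² + (ξ² − 2ξ)η + ξ³ ≥ 0. Then for every g ∈ C²[0,1] with g(0) = g'(0) = 0, one has ∫₀¹ |g'' + ξg' + ηg|² ≤ ∫₀¹ |g''|². -/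
/-!
Expanding the square and integrating the cross terms by parts (with `g 0 = g' 0 = 0`) writes
`∫ ‖g'' + ξ g' + η g‖² - ∫ ‖g''‖²` as `(ξ² - 2η) ∫ ‖g'‖² + η² ∫ ‖g‖²` plus boundary terms at `1`.
Wirtinger's inequality `π² ∫ ‖g‖² ≤ 4 ∫ ‖g'‖²` (via Picone's identity), `‖g 1‖² ≤ ∫ ‖g'‖²` and
Cauchy–Schwarz bound this by a quadratic form in `(‖g 1‖, ‖g' 1‖)`, and the conditions on `ξ, η`
make that form negative semidefinite.
-/

open Real Set Filter Topology MeasureTheory intervalIntegral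

theorem integral_eq_sub_of_hasDerivWithinAt_Icc {F : Type*} [NormedAddCommGroup F]
    [NormedSpace ℝ F] [CompleteSpace F] {f f' : ℝ → F} {a b : ℝ} (hab : a ≤ b)
    (hf : ∀ x ∈ Icc a b, HasDerivWithinAt f (f' x) (Icc a b) x)
    (hint : IntervalIntegrable f' volume a b) :
    ∫ x in a..b, f' x = f b - f a :=
  integral_eq_sub_of_hasDerivAt_of_le hab (fun x hx => (hf x hx).continuousWithinAt)
    (fun x hx => (hf x (Ioo_subset_Icc_self hx)).hasDerivAt (Icc_mem_nhds hx.1 hx.2)) hint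

theorem sq_integral_le_mul_integral_sq {f : ℝ → ℝ} {a b : ℝ} (hab : a ≤ b)
    (hf : ContinuousOn f (Icc a b)) :
    (∫ x in a..b, f x) ^ 2 ≤ (b - a) * ∫ x in a..b, f x ^ 2 := by
  have hf₁ : IntervalIntegrable f volume a b := hf.intervalIntegrable_of_Icc hab
  have hf₂ : IntervalIntegrable (fun x => f x ^ 2) volume a b :=
    (hf.pow 2).intervalIntegrable_of_Icc hab
  -- `λ ↦ ∫ (f - λ)²` is a nonnegative quadratic polynomial, so its discriminant is nonpositive.
  have hdisc := discrim_le_zero (a := b - a) (b := -2 * ∫ x in a..b, f x)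
    (c := ∫ x in a..b, f x ^ 2) fun l => by
    have hexp : ∫ x in a..b, (f x - l) ^ 2
        = (b - a) * (l * l) + -2 * (∫ x in a..b, f x) * l + ∫ x in a..b, f x ^ 2 := by
      rw [integral_congr fun x _ => (by ring : (f x - l) ^ 2 = f x ^ 2 - f x * (2 * l) + l ^ 2),
        integral_add (hf₂.sub (hf₁.mul_const _)) intervalIntegrable_const,
        integral_sub hf₂ (hf₁.mul_const _), intervalIntegral.integral_mul_const,
        intervalIntegral.integral_const, smul_eq_mul]
      ring
    exact hexp ▸ integral_nonneg hab fun x _ => sq_nonneg _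
  unfold discrim at hdisc
  nlinarith

variable {E : Type*} [NormedAddCommGroup E] [InnerProductSpace ℝ E]

theorem norm_sub_sq_le_mul_integral_norm_deriv_sq {g g' : ℝ → E} {a b : ℝ} (hab : a ≤ b)
    (hg : ∀ x ∈ Icc a b, HasDerivWithinAt g (g' x) (Icc a b) x)
    (hg' : ContinuousOn g' (Icc a b)) :
    ‖g b - g a‖ ^ 2 ≤ (b - a) * ∫ x in a..b, ‖g' x‖ ^ 2 := by
  have hderiv : ∀ x ∈ Ioo a b, HasDerivAt g (g' x) x := fun x hx =>
    (hg x (Ioo_subset_Icc_self hx)).hasDerivAt (Icc_mem_nhds hx.1 hx.2)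
  have hdisp : ‖g b - g a‖ ≤ ∫ x in a..b, ‖g' x‖ :=
    norm_sub_le_integral_of_norm_deriv_le_of_le hab
      (fun x hx => (hg x hx).continuousWithinAt)
      (fun x hx => (hderiv x hx).differentiableAt.differentiableWithinAt)
      (ae_of_all _ fun x hx => (hderiv x hx).deriv ▸ le_rfl)
      (hg'.norm.intervalIntegrable_of_Icc hab)
  calc ‖g b - g a‖ ^ 2 ≤ (∫ x in a..b, ‖g' x‖) ^ 2 := pow_le_pow_left₀ (norm_nonneg _) hdisp 2
    _ ≤ (b - a) * ∫ x in a..b, ‖g' x‖ ^ 2 := sq_integral_le_mul_integral_sq hab hg'.norm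

theorem mul_integral_norm_sq_le_of_hasDerivAt_riccati {g g' : ℝ → E} {r : ℝ → ℝ} {c a b : ℝ}
    (hab : a ≤ b) (hg : ∀ x ∈ Icc a b, HasDerivWithinAt g (g' x) (Icc a b) x)
    (hg' : ContinuousOn g' (Icc a b)) (hr : ∀ x ∈ Icc a b, HasDerivAt r (-c - r x ^ 2) x) :
    c * ∫ x in a..b, ‖g x‖ ^ 2 ≤ (∫ x in a..b, ‖g' x‖ ^ 2) + r a * ‖g a‖ ^ 2 - r b * ‖g b‖ ^ 2 := by
  have hgc : ContinuousOn g (Icc a b) := fun x hx => (hg x hx).continuousWithinAt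
  have hrc : ContinuousOn r (Icc a b) := fun x hx => (hr x hx).continuousAt.continuousWithinAt
  set W' : ℝ → ℝ := fun x => (-c - r x ^ 2) * ‖g x‖ ^ 2 + r x * (2 * inner ℝ (g x) (g' x))
  have hW'int : IntervalIntegrable W' volume a b :=
    (((continuousOn_const.sub (hrc.pow 2)).mul (hgc.norm.pow 2)).add
      (hrc.mul (continuousOn_const.mul (hgc.inner hg')))).intervalIntegrable_of_Icc hab
  have hW : ∫ x in a..b, W' x = r b * ‖g b‖ ^ 2 - r a * ‖g a‖ ^ 2 :=
    integral_eq_sub_of_hasDerivWithinAt_Icc (f := fun x => r x * ‖g x‖ ^ 2) hab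
      (fun x hx => (hr x hx).hasDerivWithinAt.mul (hg x hx).norm_sq) hW'int
  -- Picone: `‖g'‖² - c ‖g‖² = ‖g' - r g‖² + (r ‖g‖²)'`.
  have hpicone : ∀ x ∈ Icc a b, W' x ≤ ‖g' x‖ ^ 2 - c * ‖g x‖ ^ 2 := fun x _ => by
    have := norm_sub_sq_real (g' x) (r x • g x)
    rw [norm_smul, real_inner_smul_right, real_inner_comm, Real.norm_eq_abs, mul_pow,
      sq_abs] at this
    nlinarith [sq_nonneg ‖g' x - r x • g x‖]
  have hg'2int : IntervalIntegrable (fun x => ‖g' x‖ ^ 2) volume a b :=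
    (hg'.norm.pow 2).intervalIntegrable_of_Icc hab
  have hcg2int : IntervalIntegrable (fun x => c * ‖g x‖ ^ 2) volume a b :=
    ((hgc.norm.pow 2).intervalIntegrable_of_Icc hab).const_mul c
  have hmono := integral_mono_on hab hW'int (hg'2int.sub hcg2int) hpicone
  rw [integral_sub hg'2int hcg2int, intervalIntegral.integral_const_mul] at hmono
  linarith

theorem hasDerivAt_mul_tan_mul_one_sub {t x : ℝ} (hx : cos (t * (1 - x)) ≠ 0) :
    HasDerivAt (fun y => t * tan (t * (1 - y))) (-t ^ 2 - (t * tan (t * (1 - x))) ^ 2) x := by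
  have hlin : HasDerivAt (fun y => t * (1 - y)) (-t) x := by
    simpa using ((hasDerivAt_id x).const_sub 1).const_mul t
  refine (((hasDerivAt_tan hx).comp x hlin).const_mul t).congr_deriv ?_
  rw [tan_eq_sin_div_cos]
  field_simp
  linear_combination t ^ 2 * sin_sq_add_cos_sq (t * (1 - x))

theorem pi_sq_div_four_mul_integral_norm_sq_le {g g' : ℝ → E}
    (hg : ∀ x ∈ Icc (0 : ℝ) 1, HasDerivWithinAt g (g' x) (Icc 0 1) x)
    (hg' : ContinuousOn g' (Icc 0 1)) (h0 : g 0 = 0) :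
    π ^ 2 / 4 * ∫ x in (0 : ℝ)..1, ‖g x‖ ^ 2 ≤ ∫ x in (0 : ℝ)..1, ‖g' x‖ ^ 2 := by
  -- `r x = t tan (t (1 - x))` solves `r' = -t² - r²` on `[0, 1]` as long as `t < π / 2`,
  -- and `r 1 = 0`; the limit `t → π / 2` gives the sharp constant.
  have hlt : ∀ t ∈ Ioo 0 (π / 2),
      t ^ 2 * ∫ x in (0 : ℝ)..1, ‖g x‖ ^ 2 ≤ ∫ x in (0 : ℝ)..1, ‖g' x‖ ^ 2 := fun t ht => by
    have hcos : ∀ x ∈ Icc (0 : ℝ) 1, cos (t * (1 - x)) ≠ 0 := fun x hx =>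
      (cos_pos_of_mem_Ioo ⟨by nlinarith [pi_pos, hx.2, ht.1], by nlinarith [hx.1, ht.1, ht.2]⟩).ne'
    simpa [h0] using mul_integral_norm_sq_le_of_hasDerivAt_riccati zero_le_one hg hg'
      fun x hx => hasDerivAt_mul_tan_mul_one_sub (hcos x hx)
  have hlim : Tendsto (fun t => t ^ 2 * ∫ x in (0 : ℝ)..1, ‖g x‖ ^ 2) (𝓝[<] (π / 2))
      (𝓝 (π ^ 2 / 4 * ∫ x in (0 : ℝ)..1, ‖g x‖ ^ 2)) := by
    rw [show π ^ 2 / 4 = (π / 2) ^ 2 by ring]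
    exact ((continuous_pow 2).mul continuous_const).continuousAt.tendsto.mono_left
      nhdsWithin_le_nhds
  exact le_of_tendsto hlim (eventually_of_mem (Ioo_mem_nhdsLT (half_pos pi_pos)) hlt)

theorem norm_add_smul_add_smul_sq (u v w : E) (ξ η : ℝ) :
    ‖u + ξ • v + η • w‖ ^ 2 = ‖u‖ ^ 2 + (ξ ^ 2 - 2 * η) * ‖v‖ ^ 2 + η ^ 2 * ‖w‖ ^ 2
      + (ξ * (2 * inner ℝ v u) + ξ * η * (2 * inner ℝ w v)
        + 2 * η * (inner ℝ w u + inner ℝ v v)) := by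
  simp only [← real_inner_self_eq_norm_sq, inner_add_left, inner_add_right, real_inner_smul_left,
    real_inner_smul_right, real_inner_comm u, real_inner_comm v w]
  ring

theorem integral_norm_add_smul_add_smul_sq {g g' g'' : ℝ → E} {a b : ℝ} (ξ η : ℝ) (hab : a ≤ b)
    (hg : ∀ x ∈ Icc a b, HasDerivWithinAt g (g' x) (Icc a b) x)
    (hg' : ∀ x ∈ Icc a b, HasDerivWithinAt g' (g'' x) (Icc a b) x)
    (hg'' : ContinuousOn g'' (Icc a b)) (ha : g a = 0) (ha' : g' a = 0) :
    ∫ x in a..b, ‖g'' x + ξ • g' x + η • g x‖ ^ 2 =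
      (∫ x in a..b, ‖g'' x‖ ^ 2) + (ξ ^ 2 - 2 * η) * (∫ x in a..b, ‖g' x‖ ^ 2)
        + η ^ 2 * (∫ x in a..b, ‖g x‖ ^ 2)
        + (ξ * ‖g' b‖ ^ 2 + ξ * η * ‖g b‖ ^ 2 + 2 * η * inner ℝ (g b) (g' b)) := by
  have hgc : ContinuousOn g (Icc a b) := fun x hx => (hg x hx).continuousWithinAt
  have hg'c : ContinuousOn g' (Icc a b) := fun x hx => (hg' x hx).continuousWithinAt
  have hint : ∀ {f : ℝ → ℝ}, ContinuousOn f (Icc a b) → IntervalIntegrable f volume a b :=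
    fun hf => hf.intervalIntegrable_of_Icc hab
  have hg''2 : IntervalIntegrable (fun x => ‖g'' x‖ ^ 2) volume a b := hint (hg''.norm.pow 2)
  have hg'2 : IntervalIntegrable (fun x => ‖g' x‖ ^ 2) volume a b := hint (hg'c.norm.pow 2)
  have hg2 : IntervalIntegrable (fun x => ‖g x‖ ^ 2) volume a b := hint (hgc.norm.pow 2)
  set F' : ℝ → ℝ := fun x => ξ * (2 * inner ℝ (g' x) (g'' x)) + ξ * η * (2 * inner ℝ (g x) (g' x))
    + 2 * η * (inner ℝ (g x) (g'' x) + inner ℝ (g' x) (g' x))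
  have hF' : IntervalIntegrable F' volume a b :=
    hint (((continuousOn_const.mul (continuousOn_const.mul (hg'c.inner hg''))).add
      (continuousOn_const.mul (continuousOn_const.mul (hgc.inner hg'c)))).add
      (continuousOn_const.mul ((hgc.inner hg'').add (hg'c.inner hg'c))))
  have hcross := integral_eq_sub_of_hasDerivWithinAt_Icc
    (f := fun x => ξ * ‖g' x‖ ^ 2 + ξ * η * ‖g x‖ ^ 2 + 2 * η * inner ℝ (g x) (g' x)) hab
    (fun x hx => (((hg' x hx).norm_sq.const_mul ξ).add ((hg x hx).norm_sq.const_mul (ξ * η))).add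
      (((hg x hx).inner ℝ (hg' x hx)).const_mul (2 * η))) hF'
  simp only [ha, ha', norm_zero, inner_zero_left] at hcross
  rw [integral_congr fun x _ => norm_add_smul_add_smul_sq (g'' x) (g' x) (g x) ξ η,
    integral_add ((hg''2.add (hg'2.const_mul _)).add (hg2.const_mul _)) hF',
    integral_add (hg''2.add (hg'2.const_mul _)) (hg2.const_mul _),
    integral_add hg''2 (hg'2.const_mul _), intervalIntegral.integral_const_mul,
    intervalIntegral.integral_const_mul, hcross]
  ring

theorem quadratic_form_nonpos {a b c : ℝ} (ha : a ≤ 0) (hc : c ≤ 0) (hb : b ^ 2 ≤ a * c)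
    (s t : ℝ) : a * s ^ 2 + 2 * b * s * t + c * t ^ 2 ≤ 0 := by
  rcases ha.lt_or_eq with ha | rfl
  · have hdef : 0 ≤ a * (a * s ^ 2 + 2 * b * s * t + c * t ^ 2) := by
      nlinarith [sq_nonneg (a * s + b * t), mul_nonneg (sub_nonneg.2 hb) (sq_nonneg t)]
    exact nonpos_of_mul_nonneg_right hdef ha
  · obtain rfl : b = 0 := by simpa using hb
    nlinarith [sq_nonneg t]

theorem key_quadratic_estimate (ξ η : ℝ)
    (h1 : ξ ≤ 0)
    (h2 : 4 * η ^ 2 / π ^ 2 - 2 * η + ξ ^ 2 ≤ 0)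
    (h3 : 0 ≤ (4 * ξ / π ^ 2 - 1) * η ^ 2 + (ξ ^ 2 - 2 * ξ) * η + ξ ^ 3)
    (g g' g'' : ℝ → ℂ)
    (hg' : ∀ x ∈ Set.Icc (0 : ℝ) 1, HasDerivWithinAt g (g' x) (Set.Icc 0 1) x)
    (hg'' : ∀ x ∈ Set.Icc (0 : ℝ) 1, HasDerivWithinAt g' (g'' x) (Set.Icc 0 1) x)
    (hcont : ContinuousOn g'' (Set.Icc 0 1))
    (h0 : g 0 = 0) (h0' : g' 0 = 0) :
    ∫ x in (0 : ℝ)..1, ‖g'' x + (ξ : ℂ) * g' x + (η : ℂ) * g x‖ ^ 2 ≤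
      ∫ x in (0 : ℝ)..1, ‖g'' x‖ ^ 2 := by
  have hg'c : ContinuousOn g' (Icc 0 1) := fun x hx => (hg'' x hx).continuousWithinAt
  simp only [← Complex.real_smul]
  rw [integral_norm_add_smul_add_smul_sq ξ η zero_le_one hg' hg'' hcont h0 h0']
  have hη : 0 ≤ η := by
    have : 0 ≤ 4 * η ^ 2 / π ^ 2 := by positivity
    nlinarith [sq_nonneg ξ]
  set A := ∫ x in (0 : ℝ)..1, ‖g' x‖ ^ 2
  set k := 4 * η ^ 2 / π ^ 2 - 2 * η + ξ ^ 2
  have hwirt : η ^ 2 * ∫ x in (0 : ℝ)..1, ‖g x‖ ^ 2 ≤ 4 * η ^ 2 / π ^ 2 * A := by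
    have := mul_le_mul_of_nonneg_left (pi_sq_div_four_mul_integral_norm_sq_le hg' hg'c h0)
      (by positivity : 0 ≤ 4 * η ^ 2 / π ^ 2)
    calc _ = 4 * η ^ 2 / π ^ 2 * (π ^ 2 / 4 * ∫ x in (0 : ℝ)..1, ‖g x‖ ^ 2) := by
          field_simp
      _ ≤ _ := this
  have hend : k * A ≤ k * ‖g 1‖ ^ 2 := by
    refine mul_le_mul_of_nonpos_left ?_ h2
    simpa [h0] using norm_sub_sq_le_mul_integral_norm_deriv_sq zero_le_one hg' hg'c
  have hcs : 2 * η * inner ℝ (g 1) (g' 1) ≤ 2 * η * (‖g 1‖ * ‖g' 1‖) :=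
    mul_le_mul_of_nonneg_left (real_inner_le_norm _ _) (by positivity)
  -- `h2` and `h3` say that the form `(k + ξη) s² + 2η s t + ξ t²` is negative semidefinite.
  have hQ := quadratic_form_nonpos (a := k + ξ * η) (b := η) (c := ξ)
    (by nlinarith) h1 (by linear_combination h3) ‖g 1‖ ‖g' 1‖
  linear_combination hwirt + hend + hcs + hQ
end
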